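/- Let n = 1, 1 < p < ∞, and let v be a Lipschitz function compactly supported in (A,B) ⊂ ℝ with v ≥ 1 on [a,b], where A < a ≤ b < B. Then ‖v'‖_{L^{p,∞}((A,B), m₁)} ≥ (1/p') · max((a−A)^{-1/p'}, (B−b)^{-1/p'}), where p' = p/(p−1). -/

import Mathlib

open MeasureTheory Set Filter
open scoped ENNReal NNReal Topology

/-- The weak-`L^p` quasinorm: `‖g‖_{L^{p,∞}} = sup_{s>0} s · μ({|g| > s})^{1/p}`. -/
noncomputable def weakLpNorm {α : Type*} [MeasurableSpace α] (μ : Measure α)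
    (p : ℝ) (g : α → ℝ) : ℝ≥0∞ :=
  ⨆ s : Ioi (0 : ℝ), ENNReal.ofReal s.1 * (μ {x | s.1 < |g x|}) ^ (1 / p)

lemma lipschitz_ftc {c : ℝ≥0} {v : ℝ → ℝ} (hv : LipschitzWith c v) (A a : ℝ) :
    ∫ x in A..a, deriv v x = v a - v A := by
  have hvc : Continuous v := hv.continuous
  have hint : ∀ c d : ℝ, IntervalIntegrable v volume c d := fun c d =>
    hvc.intervalIntegrable c d
  set F : ℝ → ℝ := fun u => ∫ t in A..u, v t with hFdef
  have hFd : ∀ x : ℝ, HasDerivAt F (v x) x := fun x =>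
    intervalIntegral.integral_hasDerivAt_right (hint A x)
      (hvc.stronglyMeasurableAtFilter _ _) hvc.continuousAt
  have key1 : Tendsto (fun h : ℝ => ∫ x in A..a, (v (x + h) - v x) / h) (𝓝[≠] (0:ℝ))
      (𝓝 (v a - v A)) := by
    have ha := (hFd a).tendsto_slope_zero
    have hA := (hFd A).tendsto_slope_zero
    refine (ha.sub hA).congr' ?_
    filter_upwards [self_mem_nhdsWithin] with h (hh : h ∈ ({0}ᶜ : Set ℝ))
    have hh' : h ≠ 0 := hh
    have e1 : ∫ x in A..a, v (x + h) = ∫ x in (A+h)..(a+h), v x :=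
      intervalIntegral.integral_comp_add_right v h
    have e2 : ∫ x in (A+h)..(a+h), v x = F (a+h) - F (A+h) :=
      (intervalIntegral.integral_interval_sub_left (hint A (a+h)) (hint A (A+h))).symm
    have hc2 : Continuous fun x : ℝ => v (x + h) := hvc.comp (continuous_add_right h)
    have e3 : ∫ x in A..a, (v (x + h) - v x) / h
        = ((∫ x in A..a, v (x+h)) - ∫ x in A..a, v x) / h := by
      rw [← intervalIntegral.integral_sub (hc2.intervalIntegrable _ _) (hint A a),
        intervalIntegral.integral_div]
    have hFA : F A = 0 := intervalIntegral.integral_same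
    have hFa : (∫ x in A..a, v x) = F a := rfl
    rw [e3, e1, e2, hFa, hFA]
    simp only [smul_eq_mul]
    field_simp
    ring
  have key2 : Tendsto (fun h : ℝ => ∫ x in A..a, (v (x + h) - v x) / h) (𝓝[≠] (0:ℝ))
      (𝓝 (∫ x in A..a, deriv v x)) := by
    apply intervalIntegral.tendsto_integral_filter_of_dominated_convergence (fun _ => (c:ℝ))
    · filter_upwards with h
      have hc2 : Continuous fun x : ℝ => v (x + h) := hvc.comp (continuous_add_right h)
      exact ((hc2.sub hvc).div_const h).aestronglyMeasurable
    · filter_upwards [self_mem_nhdsWithin] with h (hh : h ∈ ({0}ᶜ : Set ℝ))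
      have hh' : h ≠ 0 := hh
      filter_upwards with x _
      have := hv.dist_le_mul (x + h) x
      rw [Real.dist_eq, Real.dist_eq] at this
      simp only [add_sub_cancel_left] at this
      rw [norm_div, Real.norm_eq_abs, Real.norm_eq_abs]
      rw [div_le_iff₀ (abs_pos.mpr hh')]
      exact this
    · exact intervalIntegrable_const
    · have hae : ∀ᵐ x : ℝ, DifferentiableAt ℝ v x := hv.ae_differentiableAt
      filter_upwards [hae] with x hx _
      have := hx.hasDerivAt.tendsto_slope_zero
      refine this.congr fun t => ?_
      simp [smul_eq_mul, div_eq_inv_mul]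
  exact tendsto_nhds_unique key2 key1

lemma weak_key (p : ℝ) (hp : 1 < p) (A B c d : ℝ) (hcd : c < d) (hsub : Ioo c d ⊆ Ioo A B)
    (g : ℝ → ℝ) (hg : Measurable g) (hg0 : ∀ x, 0 ≤ g x)
    (hint : 1 ≤ ∫⁻ x in Ioo c d, ENNReal.ofReal (g x)) :
    ENNReal.ofReal ((p/(p-1))⁻¹ * (d-c) ^ (-(p/(p-1))⁻¹)) ≤
      weakLpNorm (volume.restrict (Ioo A B)) p g := by
  have hp0 : 0 < p := lt_trans one_pos hp
  have hp1 : 0 < p - 1 := by linarith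
  set N := weakLpNorm (volume.restrict (Ioo A B)) p g with hN
  set ℓ : ℝ := d - c with hℓdef
  have hℓ : 0 < ℓ := by simp [hℓdef]; linarith
  -- each term of the sup is ≤ N
  have hterm : ∀ s : ℝ, 0 < s →
      ENNReal.ofReal s * ((volume.restrict (Ioo A B)) {x | s < g x}) ^ (1 / p) ≤ N := by
    intro s hs
    have hset : {x : ℝ | s < |g x|} = {x : ℝ | s < g x} := by
      ext x; simp [abs_of_nonneg (hg0 x)]
    have := le_iSup (fun t : Ioi (0:ℝ) =>
      ENNReal.ofReal t.1 * ((volume.restrict (Ioo A B)) {x | t.1 < |g x|}) ^ (1 / p))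
      (⟨s, hs⟩ : Ioi (0:ℝ))
    rw [hset] at this
    exact this
  -- restrict monotonicity
  have hres : ∀ s : Set ℝ, (volume.restrict (Ioo c d)) s ≤ (volume.restrict (Ioo A B)) s :=
    fun s => Measure.le_iff'.1 (Measure.restrict_mono hsub le_rfl) s
  -- layer cake
  have hlc : (∫⁻ x in Ioo c d, ENNReal.ofReal (g x)) =
      ∫⁻ t in Ioi (0:ℝ), (volume.restrict (Ioo c d)) {x | t < g x} :=
    lintegral_eq_lintegral_meas_lt _ (Eventually.of_forall hg0) hg.aemeasurable
  rcases eq_top_or_lt_top N with hNt | hNt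
  · exact hNt ▸ le_top
  by_cases hN0 : N = 0
  · -- then all superlevel measures vanish, contradicting `1 ≤ ∫ g`
    exfalso
    have hzero : ∀ t : ℝ, 0 < t → (volume.restrict (Ioo c d)) {x | t < g x} = 0 := by
      intro t ht
      have h1 := hterm t ht
      rw [hN0] at h1
      have h2 : ((volume.restrict (Ioo A B)) {x | t < g x}) ^ (1/p) = 0 := by
        have := le_antisymm h1 zero_le
        rcases mul_eq_zero.1 this with h | h
        · exact absurd h (by simp [ENNReal.ofReal_eq_zero]; linarith)
        · exact h
      have h3 : (volume.restrict (Ioo A B)) {x | t < g x} = 0 := by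
        rcases (ENNReal.rpow_eq_zero_iff.1 h2) with ⟨h,_⟩ | ⟨h,hc⟩
        · exact h
        · exact absurd hc (not_lt.2 (by positivity))
      exact le_antisymm ((hres _).trans h3.le) zero_le
    have : (∫⁻ t in Ioi (0:ℝ), (volume.restrict (Ioo c d)) {x | t < g x}) = 0 := by
      rw [setLIntegral_congr_fun measurableSet_Ioi
        (fun t ht => hzero t ht)]
      simp
    rw [hlc, this] at hint
    simp at hint
  -- main case: 0 < N < ⊤
  have hn : 0 < N.toReal := ENNReal.toReal_pos hN0 hNt.ne
  set n : ℝ := N.toReal with hndef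
  set s₀ : ℝ := n * ℓ ^ (-(1/p)) with hs₀def
  have hs₀ : 0 < s₀ := mul_pos hn (Real.rpow_pos_of_pos hℓ _)
  -- Chebyshev-type bound
  have hcheb : ∀ t : ℝ, 0 < t →
      (volume.restrict (Ioo c d)) {x | t < g x} ≤ N ^ p * (ENNReal.ofReal t) ^ (-p) := by
    intro t ht
    set m := (volume.restrict (Ioo A B)) {x | t < g x} with hm
    have h1 : m ^ (1/p) * ENNReal.ofReal t ≤ N := by
      rw [mul_comm]; exact hterm t ht
    have ht0 : ENNReal.ofReal t ≠ 0 := by simp [ENNReal.ofReal_eq_zero]; linarith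
    have h2 : m ^ (1/p) ≤ N / ENNReal.ofReal t :=
      (ENNReal.le_div_iff_mul_le (Or.inl ht0) (Or.inl ENNReal.ofReal_ne_top)).2 h1
    have h3 : m = (m ^ (1/p)) ^ p := by
      rw [← ENNReal.rpow_mul, one_div, inv_mul_cancel₀ hp0.ne', ENNReal.rpow_one]
    have h4 : (N / ENNReal.ofReal t) ^ p = N ^ p * (ENNReal.ofReal t) ^ (-p) := by
      rw [div_eq_mul_inv, ENNReal.mul_rpow_of_ne_top hNt.ne (by simp [ht0]),
        ENNReal.inv_rpow, ← ENNReal.rpow_neg]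
    calc (volume.restrict (Ioo c d)) {x | t < g x} ≤ m := hres _
      _ = (m ^ (1/p)) ^ p := h3
      _ ≤ (N / ENNReal.ofReal t) ^ p := ENNReal.rpow_le_rpow h2 hp0.le
      _ = N ^ p * (ENNReal.ofReal t) ^ (-p) := h4
  -- trivial bound by length
  have hlen : ∀ t : ℝ, (volume.restrict (Ioo c d)) {x | t < g x} ≤ ENNReal.ofReal ℓ := by
    intro t
    calc (volume.restrict (Ioo c d)) {x | t < g x}
        ≤ (volume.restrict (Ioo c d)) univ := measure_mono (subset_univ _)
      _ = ENNReal.ofReal ℓ := by rw [Measure.restrict_apply_univ, Real.volume_Ioo]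
  -- split the layer-cake integral
  have hsplit : (∫⁻ t in Ioi (0:ℝ), (volume.restrict (Ioo c d)) {x | t < g x}) ≤
      ENNReal.ofReal ℓ * ENNReal.ofReal s₀ +
        N ^ p * ENNReal.ofReal (s₀ ^ (1 - p) / (p - 1)) := by
    rw [← Ioc_union_Ioi_eq_Ioi hs₀.le,
      lintegral_union measurableSet_Ioi Ioc_disjoint_Ioi_same]
    gcongr
    · calc (∫⁻ t in Ioc (0:ℝ) s₀, (volume.restrict (Ioo c d)) {x | t < g x})
          ≤ ∫⁻ _ in Ioc (0:ℝ) s₀, ENNReal.ofReal ℓ := lintegral_mono fun t => hlen t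
        _ = ENNReal.ofReal ℓ * ENNReal.ofReal s₀ := by
            rw [setLIntegral_const, Real.volume_Ioc, sub_zero]
    · have step1 : (∫⁻ t in Ioi s₀, (volume.restrict (Ioo c d)) {x | t < g x})
          ≤ ∫⁻ t in Ioi s₀, N ^ p * ENNReal.ofReal (t ^ (-p)) := by
        apply setLIntegral_mono' measurableSet_Ioi
        intro t ht
        have ht0 : 0 < t := lt_trans hs₀ ht
        calc (volume.restrict (Ioo c d)) {x | t < g x}
            ≤ N ^ p * (ENNReal.ofReal t) ^ (-p) := hcheb t ht0
          _ = N ^ p * ENNReal.ofReal (t ^ (-p)) := by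
              rw [ENNReal.ofReal_rpow_of_pos ht0]
      refine step1.trans ?_
      rw [lintegral_const_mul' _ _ (ENNReal.rpow_ne_top_of_nonneg hp0.le hNt.ne)]
      gcongr
      have hint2 : IntegrableOn (fun t : ℝ => t ^ (-p)) (Ioi s₀) :=
        integrableOn_Ioi_rpow_of_lt (by linarith) hs₀
      have hnn : 0 ≤ᵐ[volume.restrict (Ioi s₀)] fun t : ℝ => t ^ (-p) := by
        rw [EventuallyLE, ae_restrict_iff' measurableSet_Ioi]
        exact Eventually.of_forall fun t ht =>
          Real.rpow_nonneg (le_of_lt (lt_trans hs₀ ht)) _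
      rw [← ofReal_integral_eq_lintegral_ofReal hint2 hnn,
        integral_Ioi_rpow_of_lt (by linarith) hs₀]
      apply ENNReal.ofReal_le_ofReal
      have hexp : (-p) + 1 = 1 - p := by ring
      rw [hexp]
      have h6 : (1:ℝ) - p ≠ 0 := by linarith
      have h7 : p - 1 ≠ 0 := by linarith
      apply le_of_eq
      field_simp
      ring
  -- combine
  have hNn : N = ENNReal.ofReal n := (ENNReal.ofReal_toReal hNt.ne).symm
  have hNp : N ^ p = ENNReal.ofReal (n ^ p) := by
    rw [hNn, ENNReal.ofReal_rpow_of_pos hn]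
  have hmain : (1:ℝ≥0∞) ≤ ENNReal.ofReal (ℓ * s₀ + n ^ p * (s₀ ^ (1-p) / (p-1))) := by
    calc (1:ℝ≥0∞) ≤ ∫⁻ x in Ioo c d, ENNReal.ofReal (g x) := hint
      _ = ∫⁻ t in Ioi (0:ℝ), (volume.restrict (Ioo c d)) {x | t < g x} := hlc
      _ ≤ ENNReal.ofReal ℓ * ENNReal.ofReal s₀ +
            N ^ p * ENNReal.ofReal (s₀ ^ (1 - p) / (p - 1)) := hsplit
      _ = ENNReal.ofReal (ℓ * s₀ + n ^ p * (s₀ ^ (1-p) / (p-1))) := by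
          rw [hNp, ← ENNReal.ofReal_mul hℓ.le, ← ENNReal.ofReal_mul (by positivity),
            ← ENNReal.ofReal_add (by positivity) (by positivity)]
  have hreal : (1:ℝ) ≤ ℓ * s₀ + n ^ p * (s₀ ^ (1-p) / (p-1)) := ENNReal.one_le_ofReal.1 hmain
  -- real computation
  set r : ℝ := (p-1)/p with hrdef
  have hr : 0 < r := by positivity
  have hqinv : (p/(p-1))⁻¹ = r := by rw [inv_div]
  have hX : ℓ * s₀ + n ^ p * (s₀ ^ (1-p) / (p-1)) = (p/(p-1)) * (n * ℓ ^ r) := by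
    have e1 : ℓ * ℓ ^ (-(1/p)) = ℓ ^ r := by
      rw [show r = 1 + (-(1/p)) by rw [hrdef]; field_simp; ring,
        Real.rpow_add hℓ, Real.rpow_one]
    have e2 : s₀ ^ (1-p) = n ^ (1-p) * ℓ ^ ((-(1/p)) * (1-p)) := by
      rw [hs₀def, Real.mul_rpow hn.le (Real.rpow_pos_of_pos hℓ _).le,
        ← Real.rpow_mul hℓ.le]
    have e3 : (-(1/p)) * (1-p) = r := by rw [hrdef]; field_simp; try ring
    have e4 : n ^ p * n ^ (1-p) = n := by
      rw [← Real.rpow_add hn]; norm_num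
    rw [e2, e3]
    calc ℓ * s₀ + n ^ p * (n ^ (1-p) * ℓ ^ r / (p-1))
        = n * (ℓ * ℓ ^ (-(1/p))) + (n ^ p * n ^ (1-p)) * ℓ ^ r / (p-1) := by
          rw [hs₀def]; ring
      _ = n * ℓ ^ r + n * ℓ ^ r / (p-1) := by rw [e1, e4]
      _ = (p/(p-1)) * (n * ℓ ^ r) := by field_simp; ring
  rw [hX] at hreal
  have hq : 0 < p/(p-1) := by positivity
  have hcancel : ℓ ^ (-r) * ℓ ^ r = 1 := by
    rw [← Real.rpow_add hℓ, neg_add_cancel, Real.rpow_zero]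
  have hrq : r * (p/(p-1)) = 1 := by rw [hrdef]; field_simp
  have hfinal : r * ℓ ^ (-r) ≤ n := by
    calc r * ℓ ^ (-r) = r * ℓ ^ (-r) * 1 := (mul_one _).symm
      _ ≤ r * ℓ ^ (-r) * ((p/(p-1)) * (n * ℓ ^ r)) := by
          apply mul_le_mul_of_nonneg_left hreal (by positivity)
      _ = (r * (p/(p-1))) * n * (ℓ ^ (-r) * ℓ ^ r) := by ring
      _ = n := by rw [hrq, hcancel]; ring
  calc ENNReal.ofReal ((p/(p-1))⁻¹ * ℓ ^ (-(p/(p-1))⁻¹))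
      ≤ ENNReal.ofReal n := ENNReal.ofReal_le_ofReal (by rw [hqinv]; exact hfinal)
    _ = N := hNn.symm

/-- If `v` is Lipschitz, compactly supported in `(A,B) ⊆ ℝ`, and `v ≥ 1` on `[a,b]`
with `A < a ≤ b < B`, then
`‖v'‖_{L^{p,∞}((A,B), m₁)} ≥ (1/p') · max((a−A)^{−1/p'}, (B−b)^{−1/p'})`,
where `p' = p/(p−1)`. -/
theorem weakLp_lower_bound_deriv (p : ℝ) (hp : 1 < p)
    (A a b B : ℝ) (hAa : A < a) (hab : a ≤ b) (hbB : b < B)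
    (v : ℝ → ℝ) (hv : ∃ c, LipschitzWith c v) (hvsupp : HasCompactSupport v)
    (hvΩ : tsupport v ⊆ Ioo A B) (hv1 : ∀ x ∈ Icc a b, 1 ≤ v x) :
    ENNReal.ofReal ((p / (p - 1))⁻¹ *
        max ((a - A) ^ (-(p / (p - 1))⁻¹)) ((B - b) ^ (-(p / (p - 1))⁻¹))) ≤
      weakLpNorm (volume.restrict (Ioo A B)) p (fun x => |deriv v x|) := by
  obtain ⟨c, hlip⟩ := hv
  have hvc : Continuous v := hlip.continuous
  set g : ℝ → ℝ := fun x => |deriv v x| with hgdef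
  have hgmeas : Measurable g := (measurable_deriv v).abs
  have hg0 : ∀ x, 0 ≤ g x := fun x => abs_nonneg _
  have hgbd : ∀ x, g x ≤ c := fun x => by
    simpa [Real.norm_eq_abs] using norm_deriv_le_of_lipschitz (f := v) (x₀ := x) hlip
  -- integral lower bounds on the two side intervals
  have key : ∀ c' d' : ℝ, c' < d' → 1 ≤ |v d' - v c'| →
      1 ≤ ∫⁻ x in Ioo c' d', ENNReal.ofReal (g x) := by
    intro c' d' hcd h1
    have hIntOn : IntegrableOn g (Ioo c' d') volume := by
      apply Measure.integrableOn_of_bounded measure_Ioo_lt_top.ne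
        hgmeas.aestronglyMeasurable (M := (c:ℝ))
      exact Eventually.of_forall fun x => by rw [Real.norm_eq_abs, abs_of_nonneg (hg0 x)]; exact hgbd x
    have hftc : ∫ x in c'..d', deriv v x = v d' - v c' := lipschitz_ftc hlip c' d'
    have h2 : (1:ℝ) ≤ ∫ x in c'..d', g x := by
      calc (1:ℝ) ≤ |v d' - v c'| := h1
        _ = |∫ x in c'..d', deriv v x| := by rw [hftc]
        _ ≤ ∫ x in c'..d', |deriv v x| :=
            intervalIntegral.abs_integral_le_integral_abs hcd.le
    have h3 : (∫ x in c'..d', g x) = ∫ x in Ioo c' d', g x := by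
      rw [intervalIntegral.integral_of_le hcd.le, integral_Ioc_eq_integral_Ioo]
    rw [h3] at h2
    have h4 := ofReal_integral_eq_lintegral_ofReal hIntOn
      (Eventually.of_forall fun x => hg0 x)
    calc (1:ℝ≥0∞) = ENNReal.ofReal 1 := by simp
      _ ≤ ENNReal.ofReal (∫ x in Ioo c' d', g x) := ENNReal.ofReal_le_ofReal h2
      _ = _ := h4
  have hvA : v A = 0 := image_eq_zero_of_notMem_tsupport fun h => (lt_irrefl A (hvΩ h).1)
  have hvB : v B = 0 := image_eq_zero_of_notMem_tsupport fun h => (lt_irrefl B (hvΩ h).2)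
  have hbd1 : ENNReal.ofReal ((p/(p-1))⁻¹ * (a-A) ^ (-(p/(p-1))⁻¹)) ≤
      weakLpNorm (volume.restrict (Ioo A B)) p g := by
    apply weak_key p hp A B A a hAa (Ioo_subset_Ioo le_rfl (by linarith)) g hgmeas hg0
    apply key A a hAa
    have := hv1 a ⟨le_refl a, hab⟩
    rw [hvA]
    rw [abs_of_nonneg (by linarith)]; linarith
  have hbd2 : ENNReal.ofReal ((p/(p-1))⁻¹ * (B-b) ^ (-(p/(p-1))⁻¹)) ≤
      weakLpNorm (volume.restrict (Ioo A B)) p g := by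
    apply weak_key p hp A B b B hbB (Ioo_subset_Ioo (by linarith) le_rfl) g hgmeas hg0
    apply key b B hbB
    have := hv1 b ⟨hab, le_refl b⟩
    rw [hvB]
    rw [abs_of_nonpos (by linarith)]; linarith
  have hqinv : (0:ℝ) ≤ (p/(p-1))⁻¹ :=
    inv_nonneg.2 (div_nonneg (by linarith) (by linarith))
  have hmono : Monotone ENNReal.ofReal := fun _ _ h => ENNReal.ofReal_le_ofReal h
  rw [mul_max_of_nonneg _ _ hqinv, hmono.map_max]
  exact max_le hbd1 hbd2
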